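/- Let G be a connected graph with first Betti number g and n leaf edges, and let m ≥ 2. The number of assignments of elements of Z/mZ to the edges of G such that at every non-leaf vertex the incident edge labels (with appropriate orientation conventions for trivalent graphs: edge labels around each internal vertex summing to 0 in Z/mZ) sum to 0, with the leaf edge labels fixed to values a_1,...,a_n ∈ Z/mZ, equals m^g if a_1 + ... + a_n = 0 in Z/mZ, and equals 0 otherwise. -/

import Mathlib

/-!
The antisymmetric labelings supported on the edges are the `1`-chains `C₁(G; M)`, a group
isomorphic to `M ^ E`, and the vertex conditions say exactly that their boundary is the function
`b` equal to `a` at the leaves and to `0` at the internal vertices. For connected `G` the image of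
`∂ : C₁ → C₀` is the subgroup of functions with total sum `0`: a path from `v` to `w` carries a
chain with boundary `δ_v - δ_w`. Hence there is no solution unless `∑ a = 0`, and otherwise the
solutions form a coset of `ker ∂`, which has `|M| ^ E / |M| ^ (|V| - 1) = |M| ^ g` elements.
-/

open Finset

namespace SimpleGraph

variable {V : Type*} (G : SimpleGraph V) (M : Type*) [AddCommGroup M]

/-- A `1`-chain is encoded by its values `ℓ v u` on the oriented edges `(v, u)`. -/
def edgeChains : AddSubgroup (V → V → M) where
  carrier := {ℓ | (∀ v u, ¬ G.Adj v u → ℓ v u = 0) ∧ ∀ v u, ℓ v u = -ℓ u v}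
  zero_mem' := by simp
  add_mem' := by
    rintro ℓ ℓ' ⟨hℓ, hℓ'⟩ ⟨hk, hk'⟩
    exact ⟨fun v u h => by simp [hℓ v u h, hk v u h],
      fun v u => by simp [hℓ' v u, hk' v u, add_comm]⟩
  neg_mem' := by
    rintro ℓ ⟨hℓ, hℓ'⟩
    exact ⟨fun v u h => by simp [hℓ v u h], fun v u => by simp [hℓ' v u]⟩

variable {G M}

theorem edgeChains_apply_eq_zero (ℓ : G.edgeChains M) {v u : V} (h : ¬ G.Adj v u) :
    (ℓ : V → V → M) v u = 0 :=
  ℓ.2.1 v u h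

theorem edgeChains_apply_swap (ℓ : G.edgeChains M) (v u : V) :
    (ℓ : V → V → M) v u = -(ℓ : V → V → M) u v :=
  ℓ.2.2 v u

theorem single_single_sub_single_single_mem_edgeChains [DecidableEq V] {v w : V} (h : G.Adj v w)
    (x : M) : Pi.single v (Pi.single w x) - Pi.single w (Pi.single v x) ∈ G.edgeChains M := by
  refine ⟨fun a b hab => ?_, fun a b => ?_⟩
  · have : ¬ (a = v ∧ b = w) := by rintro ⟨rfl, rfl⟩; exact hab h
    have : ¬ (a = w ∧ b = v) := by rintro ⟨rfl, rfl⟩; exact hab h.symm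
    simp only [Pi.sub_apply, Pi.single_apply, ite_apply, Pi.zero_apply]
    split_ifs <;> simp_all
  · simp only [Pi.sub_apply, Pi.single_apply, ite_apply, Pi.zero_apply]
    split_ifs <;> simp_all

section Orientation

variable [LinearOrder V] [DecidableRel G.Adj]

variable (G M) in
def orientedChain (c : G.edgeSet → M) (v u : V) : M :=
  if h : G.Adj v u then (if v ≤ u then c ⟨s(v, u), h⟩ else -c ⟨s(v, u), h⟩) else 0

theorem orientedChain_mem_edgeChains (c : G.edgeSet → M) :
    G.orientedChain M c ∈ G.edgeChains M := by
  refine ⟨fun v u h => dif_neg h, fun v u => ?_⟩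
  by_cases h : G.Adj v u
  · have hswap : (⟨s(u, v), h.symm⟩ : G.edgeSet) = ⟨s(v, u), h⟩ := Subtype.ext Sym2.eq_swap
    rcases lt_or_gt_of_ne h.ne with hvu | hvu
    · simp [orientedChain, h, h.symm, hswap, hvu.le, hvu.not_ge]
    · simp [orientedChain, h, h.symm, hswap, hvu.le, hvu.not_ge]
  · simp [orientedChain, h, G.adj_comm u v]

variable (G M) in
def edgeChainsEquiv : G.edgeChains M ≃ (G.edgeSet → M) where
  toFun ℓ e := (ℓ : V → V → M) e.1.inf e.1.sup
  invFun c := ⟨G.orientedChain M c, orientedChain_mem_edgeChains c⟩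
  left_inv ℓ := by
    ext v u
    by_cases h : G.Adj v u
    · rcases le_or_gt v u with hvu | hvu
      · simp [orientedChain, h, hvu]
      · simp [orientedChain, h, hvu.le, hvu.not_ge, edgeChains_apply_swap ℓ v u]
    · simp [orientedChain, h, edgeChains_apply_eq_zero ℓ h]
  right_inv c := by
    ext ⟨e, he⟩
    induction e using Sym2.ind with
    | _ v w =>
      rcases le_total v w with hvw | hvw
      · simp [orientedChain, hvw, G.mem_edgeSet.1 he]
      · simp only [orientedChain, Sym2.inf_mk, Sym2.sup_mk, min_eq_right hvw, max_eq_left hvw,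
          dif_pos (G.mem_edgeSet.1 he).symm, if_pos hvw]
        exact congrArg c (Subtype.ext Sym2.eq_swap)

end Orientation

theorem card_edgeChains [Fintype V] [DecidableRel G.Adj] :
    Nat.card (G.edgeChains M) = Nat.card M ^ #G.edgeFinset := by
  let : LinearOrder V := LinearOrder.lift' _ (Fintype.equivFin V).injective
  rw [Nat.card_congr (G.edgeChainsEquiv M), Nat.card_fun, Nat.card_eq_fintype_card (α := G.edgeSet),
    edgeFinset_card]

section Boundary

variable [Fintype V]

variable (G M) in
def boundary : G.edgeChains M →+ (V → M) where
  toFun ℓ v := ∑ u, (ℓ : V → V → M) v u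
  map_zero' := by ext; simp
  map_add' ℓ ℓ' := by ext; simp [sum_add_distrib]

theorem boundary_apply (ℓ : G.edgeChains M) (v : V) :
    G.boundary M ℓ v = ∑ u, (ℓ : V → V → M) v u :=
  rfl

theorem sum_neighborFinset_eq_boundary [DecidableRel G.Adj] (ℓ : G.edgeChains M) (v : V) :
    ∑ u ∈ G.neighborFinset v, (ℓ : V → V → M) v u = G.boundary M ℓ v :=
  sum_subset (subset_univ _) fun u _ hu => edgeChains_apply_eq_zero ℓ (by simpa using hu)

theorem sum_boundary_eq_zero (ℓ : G.edgeChains M) : ∑ v, G.boundary M ℓ v = 0 := by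
  simp only [boundary_apply, ← sum_product']
  refine sum_involution (fun p _ => p.swap) (fun p _ => ?_) (fun p _ hp hswap => ?_)
    (fun p _ => mem_univ _) (fun p _ => p.swap_swap)
  · simp [edgeChains_apply_swap ℓ p.1 p.2]
  · exact hp (edgeChains_apply_eq_zero ℓ (congrArg Prod.snd hswap ▸ G.irrefl))

theorem single_sub_single_mem_range_boundary [DecidableEq V] {v w : V} (h : G.Reachable v w)
    (x : M) : Pi.single v x - Pi.single w x ∈ (G.boundary M).range := by
  obtain ⟨p⟩ := h
  induction p with
  | nil => exact ⟨0, by simp⟩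
  | @cons v u w hadj p ih =>
    have hedge : Pi.single v x - Pi.single u x ∈ (G.boundary M).range := by
      refine ⟨⟨_, single_single_sub_single_single_mem_edgeChains hadj x⟩, ?_⟩
      ext a
      simp only [boundary_apply, Pi.sub_apply, sum_sub_distrib, Pi.single_apply, ite_apply,
        Pi.zero_apply]
      split_ifs <;> simp
    simpa using add_mem hedge ih

theorem mem_range_boundary (hG : G.Connected) {f : V → M} :
    f ∈ (G.boundary M).range ↔ ∑ v, f v = 0 := by
  classical
  refine ⟨fun ⟨ℓ, hℓ⟩ => hℓ ▸ sum_boundary_eq_zero ℓ, fun hf => ?_⟩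
  obtain ⟨v₀⟩ := hG.nonempty
  have hf : f = ∑ v, (Pi.single v (f v) - Pi.single v₀ (f v)) := by
    ext x
    simp [sum_sub_distrib, Pi.single_apply, hf]
  exact hf ▸ sum_mem fun v _ => single_sub_single_mem_range_boundary (hG.preconnected v v₀) _

theorem card_ker_boundary [Finite M] {g : ℕ} [DecidableRel G.Adj] (hG : G.Connected)
    (hg : #G.edgeFinset + 1 = Fintype.card V + g) :
    Nat.card (G.boundary M).ker = Nat.card M ^ g := by
  classical
  let σ : (V → M) →+ M := AddMonoidHom.mk' (fun f => ∑ v, f v) fun _ _ => sum_add_distrib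
  have hσ : Function.Surjective σ := fun x => ⟨Pi.single hG.nonempty.some x, by simp [σ]⟩
  have hrange : (G.boundary M).range = σ.ker := by
    ext f
    exact (mem_range_boundary hG).trans (AddMonoidHom.mem_ker (f := σ)).symm
  have hchains := (G.boundary M).ker.card_mul_index
  rw [AddSubgroup.index_ker, hrange, card_edgeChains] at hchains
  have hcochains := σ.ker.card_mul_index
  rw [AddSubgroup.index_ker, AddMonoidHom.range_eq_top.2 hσ, AddSubgroup.card_top, Nat.card_fun,
    Nat.card_eq_fintype_card (α := V)] at hcochains
  refine Nat.eq_of_mul_eq_mul_left (pow_pos (Nat.card_pos (α := M)) (Fintype.card V)) ?_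
  calc Nat.card M ^ Fintype.card V * Nat.card (G.boundary M).ker
      = Nat.card (G.boundary M).ker * Nat.card σ.ker * Nat.card M := by rw [← hcochains]; ring
    _ = Nat.card M ^ (Fintype.card V + g) := by rw [hchains, ← pow_succ, hg]
    _ = Nat.card M ^ Fintype.card V * Nat.card M ^ g := pow_add _ _ _

theorem card_boundary_preimage [Finite M] [DecidableEq M] {g : ℕ} [DecidableRel G.Adj]
    (hG : G.Connected) (hg : #G.edgeFinset + 1 = Fintype.card V + g) (b : V → M) :
    Nat.card (G.boundary M ⁻¹' {b}) = if ∑ v, b v = 0 then Nat.card M ^ g else 0 := by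
  split_ifs with hb
  · obtain ⟨ℓ, rfl⟩ := (mem_range_boundary hG).2 hb
    rw [Nat.card_congr ((G.boundary M).fiberEquivKer ℓ), card_ker_boundary hG hg]
  · exact Nat.card_eq_zero.2 (.inl ⟨fun ⟨ℓ, hℓ⟩ => hb (hℓ ▸ sum_boundary_eq_zero ℓ)⟩)

variable [DecidableRel G.Adj]

theorem forall_adj_eq_iff_sum_neighborFinset_eq {v : V} (hv : G.degree v = 1) (f : V → M)
    (x : M) : (∀ u, G.Adj v u → f u = x) ↔ ∑ u ∈ G.neighborFinset v, f u = x := by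
  obtain ⟨w, hw⟩ := card_eq_one.1 hv
  simp_rw [← mem_neighborFinset, hw]
  simp

theorem boundary_eq_leafLabels_iff (hdeg : ∀ v, G.degree v = 1 ∨ G.degree v = 3) (a : V → M)
    (ℓ : G.edgeChains M) :
    G.boundary M ℓ = (fun v => if G.degree v = 1 then a v else 0) ↔
      (∀ v, G.degree v = 3 → ∑ u ∈ G.neighborFinset v, (ℓ : V → V → M) v u = 0) ∧
      ∀ v, G.degree v = 1 → ∀ u, G.Adj v u → (ℓ : V → V → M) v u = a v := by
  simp only [funext_iff, ← forall_and, ← sum_neighborFinset_eq_boundary]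
  refine forall_congr' fun v => ?_
  rcases hdeg v with hv | hv
  · simp [hv, forall_adj_eq_iff_sum_neighborFinset_eq hv]
  · simp [hv]

end Boundary

end SimpleGraph

theorem stmt5 (m g : ℕ) (hm : 2 ≤ m)
    (V : Type) [Fintype V] (G : SimpleGraph V) [DecidableRel G.Adj]
    (hconn : G.Connected)
    (hdeg : ∀ v : V, G.degree v = 1 ∨ G.degree v = 3)
    (hg : G.edgeFinset.card + 1 = Fintype.card V + g)
    (a : V → ZMod m) :
    Nat.card {ℓ : V → V → ZMod m //
        (∀ v u, ¬ G.Adj v u → ℓ v u = 0) ∧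
        (∀ v u, ℓ v u = - ℓ u v) ∧
        (∀ v, G.degree v = 3 → ∑ u ∈ G.neighborFinset v, ℓ v u = 0) ∧
        (∀ v, G.degree v = 1 → ∀ u, G.Adj v u → ℓ v u = a v)} =
      if (∑ v ∈ Finset.univ.filter (fun v => G.degree v = 1), a v) = 0
        then m ^ g else 0 := by
  have : NeZero m := ⟨by omega⟩
  let b : V → ZMod m := fun v => if G.degree v = 1 then a v else 0
  have hb : ∑ v, b v = ∑ v ∈ univ.filter (fun v => G.degree v = 1), a v := (sum_filter _ _).symm
  calc _ = Nat.card (G.boundary (ZMod m) ⁻¹' {b}) := Nat.card_congr <|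
        (Equiv.subtypeEquivRight fun ℓ =>
          ⟨fun ⟨hsupp, hanti, hsum⟩ =>
            ⟨⟨hsupp, hanti⟩, (G.boundary_eq_leafLabels_iff hdeg a _).2 hsum⟩,
          fun ⟨h, hℓ⟩ => ⟨h.1, h.2, (G.boundary_eq_leafLabels_iff hdeg a _).1 hℓ⟩⟩).trans
        (Equiv.subtypeSubtypeEquivSubtypeExists _ _).symm
    _ = _ := by rw [G.card_boundary_preimage hconn hg, hb, Nat.card_zmod]
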